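/- For any connected graph G with n ≥ 3 vertices and m edges, the total outer-connected domination number of the middle graph M(G) satisfies 2·|Leaf(G)| ≤ γ_tc(M(G)) ≤ n + m − 1, where Leaf(G) is the set of vertices of degree 1 in G. -/

import Mathlib

open SimpleGraph

/-- The middle graph `M(G)`: vertices are `V(G) ⊕ E(G)`; an edge-vertex is adjacent to
another edge-vertex iff the edges are distinct and share an endpoint, and a vertex is
adjacent to an edge iff it is incident to it. -/
def middleGraph {V : Type*} (G : SimpleGraph V) : SimpleGraph (V ⊕ G.edgeSet) where
  Adj x y :=
    match x, y with
    | Sum.inl _, Sum.inl _ => False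
    | Sum.inl v, Sum.inr e => v ∈ (e : Sym2 V)
    | Sum.inr e, Sum.inl v => v ∈ (e : Sym2 V)
    | Sum.inr e, Sum.inr f => e ≠ f ∧ ∃ v, v ∈ (e : Sym2 V) ∧ v ∈ (f : Sym2 V)
  symm := by
    refine ⟨?_⟩
    rintro (v|e) (w|f) h
    · exact h
    · exact h
    · exact h
    · exact ⟨h.1.symm, h.2.imp fun v hv => ⟨hv.2, hv.1⟩⟩
  loopless := by
    refine ⟨?_⟩
    rintro (v|e) h
    · exact h
    · exact h.1 rfl

/-- `D` is a total dominating set of `G`: every vertex has a neighbour in `D`. -/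
def IsTotalDomSet {V : Type*} (G : SimpleGraph V) (D : Set V) : Prop :=
  ∀ v : V, ∃ u ∈ D, G.Adj v u

/-- `D` is a total outer-connected dominating set of `G`: it is total dominating and
the subgraph induced on the complement of `D` is connected. -/
def IsTOCDomSet {V : Type*} (G : SimpleGraph V) (D : Set V) : Prop :=
  IsTotalDomSet G D ∧ (G.induce Dᶜ).Connected

/-- The total domination number `γₜ(G)`. -/
noncomputable def totalDomNum {V : Type*} (G : SimpleGraph V) : ℕ :=
  sInf {k | ∃ D : Set V, IsTotalDomSet G D ∧ D.ncard = k}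

/-- The total outer-connected domination number `γ_tc(G)`. -/
noncomputable def tocDomNum {V : Type*} (G : SimpleGraph V) : ℕ :=
  sInf {k | ∃ D : Set V, IsTOCDomSet G D ∧ D.ncard = k}

/-- The set of leaves (vertices of degree 1) of `G`. -/
def leafSet {V : Type*} (G : SimpleGraph V) : Set V :=
  {v | ∃ u, G.neighborSet v = {u}}

/-- The wheel graph with hub `none` and rim cycle on `Fin n`. -/
def wheelGraph (n : ℕ) : SimpleGraph (Option (Fin n)) where
  Adj x y :=
    match x, y with
    | none, none => False
    | none, some _ => True
    | some _, none => True
    | some i, some j => (SimpleGraph.cycleGraph n).Adj i j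
  symm := by
    refine ⟨?_⟩
    rintro (_|i) (_|j) h
    · exact h
    · exact h
    · exact h
    · exact (SimpleGraph.cycleGraph n).adj_symm h
  loopless := by
    refine ⟨?_⟩
    rintro (_|i) h
    · exact h
    · exact (SimpleGraph.cycleGraph n).loopless.irrefl i h

/-- The corona `G ∘ K₁`: to each vertex `a` of `G` (copy `Sum.inl a`) a pendant
vertex `Sum.inr a` is attached. -/
def corona {V : Type*} (G : SimpleGraph V) : SimpleGraph (V ⊕ V) where
  Adj x y :=
    match x, y with
    | Sum.inl a, Sum.inl b => G.Adj a b
    | Sum.inl a, Sum.inr b => a = b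
    | Sum.inr a, Sum.inl b => a = b
    | Sum.inr _, Sum.inr _ => False
  symm := by
    refine ⟨?_⟩
    rintro (a|a) (b|b) h
    · exact G.adj_symm h
    · exact h.symm
    · exact h.symm
    · exact h
  loopless := by
    refine ⟨?_⟩
    rintro (a|a) h
    · exact G.loopless.irrefl a h
    · exact h

/-- The 2-corona `G ∘ P₂`: to each vertex `a` of `G` (copy `Sum.inl a`) a path
`Sum.inl a — Sum.inr (Sum.inl a) — Sum.inr (Sum.inr a)` of length 2 is attached. -/
def corona2 {V : Type*} (G : SimpleGraph V) : SimpleGraph (V ⊕ V ⊕ V) where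
  Adj x y :=
    match x, y with
    | Sum.inl a, Sum.inl b => G.Adj a b
    | Sum.inl a, Sum.inr (Sum.inl b) => a = b
    | Sum.inr (Sum.inl a), Sum.inl b => a = b
    | Sum.inr (Sum.inl a), Sum.inr (Sum.inr b) => a = b
    | Sum.inr (Sum.inr a), Sum.inr (Sum.inl b) => a = b
    | _, _ => False
  symm := by
    refine ⟨?_⟩
    rintro (a|a|a) (b|b|b) h <;> first | exact G.adj_symm h | exact h.symm | exact h
  loopless := by
    refine ⟨?_⟩
    rintro (a|a|a) h
    · exact G.loopless.irrefl a h
    · exact h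
    · exact h

/-- The spider `S_{1,n,n}`: hub `none`, middle vertices `some (.inl i)`,
leaves `some (.inr i)`; the star `K_{1,n}` with every edge subdivided once. -/
def spiderGraph (n : ℕ) : SimpleGraph (Option (Fin n ⊕ Fin n)) where
  Adj x y :=
    match x, y with
    | none, some (Sum.inl _) => True
    | some (Sum.inl _), none => True
    | some (Sum.inl i), some (Sum.inr j) => i = j
    | some (Sum.inr i), some (Sum.inl j) => i = j
    | _, _ => False
  symm := by
    refine ⟨?_⟩
    rintro (_|i|i) (_|j|j) h <;> first | exact h.symm | exact h
  loopless := by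
    refine ⟨?_⟩
    rintro (_|i|i) h <;> exact h

/-- The friendship graph `Fₙ`: `n` triangles sharing the common vertex `none`. -/
def friendshipGraph (n : ℕ) : SimpleGraph (Option (Fin n × Fin 2)) where
  Adj x y :=
    match x, y with
    | none, some _ => True
    | some _, none => True
    | some (i, a), some (j, b) => i = j ∧ a ≠ b
    | none, none => False
  symm := by
    refine ⟨?_⟩
    rintro (_|⟨i,a⟩) (_|⟨j,b⟩) h <;> first | exact ⟨h.1.symm, h.2.symm⟩ | exact h
  loopless := by
    refine ⟨?_⟩
    rintro (_|⟨i,a⟩) h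
    · exact h
    · exact h.2 rfl


/-! A leaf `v` of `G` has a single neighbour in `M(G)`, its pendant edge, so every total
dominating set `D` of `M(G)` contains all pendant edges; these are distinct because two leaves
of a connected graph on at least three vertices are never adjacent. Besides these `|Leaf(G)|`
edge-vertices, `D` contains at least as many vertices of `G`: either all leaves, or, if a leaf
`v` is missing, connectivity of the complement of `D` forces `D ⊇ V(G) \ {v}`, and
`n - 1 ≥ |Leaf(G)|` since not every vertex is a leaf. The upper bound is witnessed by
`V(M(G)) \ {v}` for any vertex `v`. -/

section Leaves

variable {V : Type*} {G : SimpleGraph V} {v w : V}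

lemma neighborSet_subsingleton_of_mem_leafSet (hv : v ∈ leafSet G) :
    (G.neighborSet v).Subsingleton := by
  obtain ⟨u, hu⟩ := hv
  rw [hu]
  exact Set.subsingleton_singleton

lemma not_adj_of_mem_leafSet [Fintype V] (hG : G.Connected) (hn : 3 ≤ Fintype.card V)
    (hv : v ∈ leafSet G) (hw : w ∈ leafSet G) : ¬G.Adj v w := by
  classical
  intro hvw
  have hcard : ({v, w} : Finset V).card < (Finset.univ : Finset V).card :=
    (Finset.card_le_two).trans_lt (by rw [Finset.card_univ]; omega)
  obtain ⟨x, -, hx⟩ := Finset.exists_mem_notMem_of_card_lt_card hcard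
  obtain ⟨p⟩ := hG.preconnected v x
  obtain ⟨d, -, hd, hd'⟩ := p.exists_boundary_dart {v, w} (by simp) (by simpa using hx)
  rcases hd with hd | hd <;> apply hd'
  · exact Or.inr (neighborSet_subsingleton_of_mem_leafSet hv (hd ▸ d.adj) hvw)
  · exact Or.inl (neighborSet_subsingleton_of_mem_leafSet hw (hd ▸ d.adj) hvw.symm)

lemma exists_notMem_leafSet [Fintype V] (hG : G.Connected) (hn : 3 ≤ Fintype.card V) :
    ∃ x, x ∉ leafSet G := by
  have : Nontrivial V := Fintype.one_lt_card_iff_nontrivial.1 (by omega)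
  obtain ⟨v⟩ := hG.nonempty
  obtain ⟨u, hvu⟩ := hG.preconnected.exists_adj_of_nontrivial v
  by_contra! h
  exact not_adj_of_mem_leafSet hG hn (h v) (h u) hvu

end Leaves

section MiddleGraph

variable {V : Type*} {G : SimpleGraph V} {v : V}

lemma exists_eq_inr_of_middleGraph_adj_inl {x : V ⊕ G.edgeSet}
    (h : (middleGraph G).Adj (Sum.inl v) x) :
    ∃ e : G.edgeSet, x = Sum.inr e ∧ v ∈ (e : Sym2 V) := by
  cases x with
  | inl w => exact h.elim
  | inr e => exact ⟨e, rfl, h⟩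

lemma middleGraph_neighborSet_inl_subsingleton (hv : v ∈ leafSet G) :
    ((middleGraph G).neighborSet (Sum.inl v)).Subsingleton := by
  classical
  have : Subsingleton (G.incidenceSet v) :=
    (G.incidenceSetEquivNeighborSet v).subsingleton_congr.2
      (neighborSet_subsingleton_of_mem_leafSet hv).coe_sort
  intro x hx y hy
  obtain ⟨e, rfl, hve⟩ := exists_eq_inr_of_middleGraph_adj_inl hx
  obtain ⟨f, rfl, hvf⟩ := exists_eq_inr_of_middleGraph_adj_inl hy
  have hef : (⟨e, e.2, hve⟩ : G.incidenceSet v) = ⟨f, f.2, hvf⟩ := Subsingleton.elim _ _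
  simpa [Subtype.ext_iff] using hef

lemma isTOCDomSet_compl_singleton_inl (hG : ∀ u, ∃ w, G.Adj u w) (v : V) :
    IsTOCDomSet (middleGraph G) {Sum.inl v}ᶜ := by
  refine ⟨?_, ?_⟩
  · rintro (u | ⟨e, he⟩)
    · obtain ⟨w, huw⟩ := hG u
      exact ⟨Sum.inr ⟨s(u, w), huw⟩, by simp, Sym2.mem_mk_left u w⟩
    · induction e using Sym2.ind with
      | _ a b =>
        rcases eq_or_ne a v with rfl | ha
        · exact ⟨Sum.inl b, by simpa [eq_comm] using G.ne_of_adj he, Sym2.mem_mk_right a b⟩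
        · exact ⟨Sum.inl a, by simpa using ha, Sym2.mem_mk_left a b⟩
  · rw [compl_compl]
    exact Connected.of_subsingleton

lemma ncard_compl_singleton_middleGraph [Fintype V] (x : V ⊕ G.edgeSet) :
    ({x}ᶜ : Set (V ⊕ G.edgeSet)).ncard = Fintype.card V + G.edgeSet.ncard - 1 := by
  rw [Set.ncard_compl, Set.ncard_singleton, Nat.card_sum, Nat.card_eq_fintype_card,
    Nat.card_coe_set_eq]

/-- The only neighbour of the leaf `v` in `M(G)` lies in `D`, so `Sum.inl v` is isolated in the
connected graph induced on `Dᶜ`. -/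
lemma compl_subset_singleton_of_inl_notMem {D : Set (V ⊕ G.edgeSet)}
    (hD : IsTOCDomSet (middleGraph G) D) (hv : v ∈ leafSet G) (hvD : Sum.inl v ∉ D) :
    Dᶜ ⊆ {Sum.inl v} := by
  intro x hx
  by_contra hxv
  have : Nontrivial ↥Dᶜ := ⟨⟨⟨x, hx⟩, ⟨Sum.inl v, hvD⟩, by simpa using hxv⟩⟩
  obtain ⟨⟨y, hyD⟩, hy⟩ := hD.2.preconnected.exists_adj_of_nontrivial ⟨Sum.inl v, hvD⟩
  obtain ⟨z, hzD, hz⟩ := hD.1 (Sum.inl v)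
  exact hyD ((middleGraph_neighborSet_inl_subsingleton hv hz hy : z = y) ▸ hzD)

end MiddleGraph

section LowerBound

variable {V : Type*} [Fintype V] {G : SimpleGraph V} {D : Set (V ⊕ G.edgeSet)}

lemma ncard_leafSet_le_ncard_inter_range_inr (hG : G.Connected) (hn : 3 ≤ Fintype.card V)
    (hD : IsTotalDomSet (middleGraph G) D) :
    (leafSet G).ncard ≤ (D ∩ Set.range Sum.inr).ncard := by
  choose d hdD hdadj using hD
  refine Set.ncard_le_ncard_of_injOn (fun v => d (Sum.inl v)) ?_ ?_
  · intro v _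
    obtain ⟨e, he, -⟩ := exists_eq_inr_of_middleGraph_adj_inl (hdadj (Sum.inl v))
    exact ⟨hdD _, e, he.symm⟩
  · intro v hv w hw hvw
    by_contra hne
    obtain ⟨e, he, hve⟩ := exists_eq_inr_of_middleGraph_adj_inl (hdadj (Sum.inl v))
    obtain ⟨f, hf, hwf⟩ := exists_eq_inr_of_middleGraph_adj_inl (hdadj (Sum.inl w))
    obtain rfl : e = f := Sum.inr_injective (he.symm.trans (hvw.trans hf))
    have hvw' : s(v, w) ∈ G.edgeSet := (Sym2.mem_and_mem_iff hne).1 ⟨hve, hwf⟩ ▸ e.2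
    exact not_adj_of_mem_leafSet hG hn hv hw hvw'

lemma ncard_leafSet_le_ncard_diff_range_inr (hG : G.Connected) (hn : 3 ≤ Fintype.card V)
    (hD : IsTOCDomSet (middleGraph G) D) :
    (leafSet G).ncard ≤ (D \ Set.range Sum.inr).ncard := by
  by_cases hL : ∀ v ∈ leafSet G, Sum.inl v ∈ D
  · rw [← Set.ncard_image_of_injective _ Sum.inl_injective]
    exact Set.ncard_le_ncard (by rintro _ ⟨v, hv, rfl⟩; exact ⟨hL v hv, by simp⟩)
  · push Not at hL
    obtain ⟨v, hv, hvD⟩ := hL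
    have hsub := compl_subset_singleton_of_inl_notMem hD hv hvD
    obtain ⟨x, hx⟩ := exists_notMem_leafSet hG hn
    calc (leafSet G).ncard ≤ ({x}ᶜ : Set V).ncard :=
          Set.ncard_le_ncard fun w hw => ne_of_mem_of_not_mem hw hx
      _ = ({v}ᶜ : Set V).ncard := by
          rw [Set.ncard_compl, Set.ncard_compl, Set.ncard_singleton, Set.ncard_singleton]
      _ = (Sum.inl '' {v}ᶜ : Set (V ⊕ G.edgeSet)).ncard :=
          (Set.ncard_image_of_injective _ Sum.inl_injective).symm
      _ ≤ (D \ Set.range Sum.inr).ncard := by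
          refine Set.ncard_le_ncard ?_
          rintro _ ⟨w, hw, rfl⟩
          exact ⟨by_contra fun h => hw (by simpa using hsub h), by simp⟩

lemma two_mul_ncard_leafSet_le (hG : G.Connected) (hn : 3 ≤ Fintype.card V)
    (hD : IsTOCDomSet (middleGraph G) D) : 2 * (leafSet G).ncard ≤ D.ncard := by
  have hsplit := Set.ncard_inter_add_ncard_sdiff_eq_ncard D (Set.range Sum.inr)
  have hE := ncard_leafSet_le_ncard_inter_range_inr hG hn hD.1
  have hV := ncard_leafSet_le_ncard_diff_range_inr hG hn hD
  omega

end LowerBound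

lemma tocDomNum_le {V : Type*} {G : SimpleGraph V} {D : Set V} (hD : IsTOCDomSet G D) :
    tocDomNum G ≤ D.ncard :=
  Nat.sInf_le ⟨D, hD, rfl⟩

lemma le_tocDomNum {V : Type*} {G : SimpleGraph V} {k : ℕ} (hne : ∃ D, IsTOCDomSet G D)
    (h : ∀ D, IsTOCDomSet G D → k ≤ D.ncard) : k ≤ tocDomNum G := by
  obtain ⟨D, hD⟩ := hne
  refine le_csInf ⟨_, D, hD, rfl⟩ ?_
  rintro _ ⟨D, hD, rfl⟩
  exact h D hD

theorem stmt0 {V : Type*} [Fintype V] (G : SimpleGraph V) (hG : G.Connected)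
    (hn : 3 ≤ Fintype.card V) :
    2 * (leafSet G).ncard ≤ tocDomNum (middleGraph G) ∧
      tocDomNum (middleGraph G) ≤ Fintype.card V + G.edgeSet.ncard - 1 := by
  have : Nontrivial V := Fintype.one_lt_card_iff_nontrivial.1 (by omega)
  obtain ⟨v⟩ := hG.nonempty
  have hD := isTOCDomSet_compl_singleton_inl hG.preconnected.exists_adj_of_nontrivial v
  exact ⟨le_tocDomNum ⟨_, hD⟩ fun D hD => two_mul_ncard_leafSet_le hG hn hD,
    (tocDomNum_le hD).trans_eq (ncard_compl_singleton_middleGraph _)⟩
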